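/- The matching complexes that are 1-dimensional spheres (cycles) are exactly C₄, C₅, and C₆, arising uniquely from the graphs 2P₃, C₅, and K₃,₂ respectively. -/

import Mathlib

open SimpleGraph Finset

/-- Two edges (elements of `Sym2 V`) are incident if they share a vertex. -/
def Incid {V : Type} (e f : Sym2 V) : Prop := ∃ v, v ∈ e ∧ v ∈ f

/-- A face of the matching complex `M(G)`: a finite set of edges of `G`
that are pairwise non-incident (a matching of `G`). -/
def IsMatchingSet {V : Type} (G : SimpleGraph V) (s : Finset (Sym2 V)) : Prop :=
  (∀ e ∈ s, e ∈ G.edgeSet) ∧ ∀ e ∈ s, ∀ f ∈ s, e ≠ f → ¬ Incid e f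

/-- The 1-skeleton of the matching complex of `G`: the graph whose vertices are
the edges of `G`, two being adjacent iff they are distinct and non-incident. -/
def mcSkeleton {V : Type} (G : SimpleGraph V) : SimpleGraph G.edgeSet where
  Adj e f := e ≠ f ∧ ¬ Incid (e : Sym2 V) (f : Sym2 V)
  symm := ⟨fun e f h =>
    ⟨h.1.symm, fun hi => h.2 (Exists.elim hi fun v hv => ⟨v, hv.2, hv.1⟩)⟩⟩
  loopless := ⟨fun e h => h.1 rfl⟩

/-- The cycle on `ZMod n` (for `n ≥ 3` this is the `n`-cycle `Cₙ`). -/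
def cycZ (n : ℕ) : SimpleGraph (ZMod n) :=
  SimpleGraph.fromRel (fun i j => j = i + 1)

/-- The disjoint union of two paths on three vertices. -/
def twoP3 : SimpleGraph (Fin 6) :=
  SimpleGraph.fromEdgeSet {s(0, 1), s(1, 2), s(3, 4), s(4, 5)}

/-- The complete bipartite graph `K₃,₂`. -/
def K32 : SimpleGraph (Fin 3 ⊕ Fin 2) := completeBipartiteGraph (Fin 3) (Fin 2)


/- ### Auxiliary machinery -/

instance {V : Type} [Fintype V] [DecidableEq V] (e f : Sym2 V) : Decidable (Incid e f) := by
  unfold Incid; infer_instance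
instance (n : ℕ) : DecidableRel (cycZ n).Adj := fun a b =>
  decidable_of_iff _ (SimpleGraph.fromRel_adj _ a b).symm
instance : DecidableRel twoP3.Adj := fun a b =>
  decidable_of_iff ((s(a,b) = s(0,1) ∨ s(a,b) = s(1,2) ∨ s(a,b) = s(3,4) ∨ s(a,b) = s(4,5)) ∧ a ≠ b)
    (by rw [twoP3, SimpleGraph.fromEdgeSet_adj]; simp [Set.mem_insert_iff])
instance : DecidableRel K32.Adj := fun a b =>
  inferInstanceAs (Decidable ((a.isLeft ∧ b.isRight) ∨ (a.isRight ∧ b.isLeft)))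

lemma incid_symm {V : Type} {e f : Sym2 V} (h : Incid e f) : Incid f e := by
  obtain ⟨v, h1, h2⟩ := h; exact ⟨v, h2, h1⟩

lemma sym2_eq_of_two_mem {V : Type} {x y : V} (hxy : x ≠ y) {e f : Sym2 V}
    (hx : x ∈ e) (hy : y ∈ e) (hx' : x ∈ f) (hy' : y ∈ f) : e = f := by
  induction e using Sym2.ind with
  | _ a b =>
  induction f using Sym2.ind with
  | _ c d =>
  rw [Sym2.mem_iff] at hx hy hx' hy'
  rw [Sym2.eq_iff]
  rcases hx with rfl | rfl <;> rcases hx' with rfl | rfl <;>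
    rcases hy with h | h <;> rcases hy' with h' | h' <;> subst h <;> tauto

lemma eq_of_mem_mem {V : Type} {x y : V} (hxy : x ≠ y) {e : Sym2 V}
    (hx : x ∈ e) (hy : y ∈ e) : e = s(x, y) :=
  sym2_eq_of_two_mem hxy hx hy (by simp) (by simp)

lemma mem3 {V : Type} {e : Sym2 V} {a b c : V} (ha : a ∈ e) (hb : b ∈ e) (hc : c ∈ e)
    (h1 : b ≠ a) (h2 : c ≠ a) : b = c := by
  induction e using Sym2.ind with
  | _ x y =>
  rw [Sym2.mem_iff] at ha hb hc
  rcases ha with rfl | rfl <;> rcases hb with rfl | rfl <;> tauto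

lemma quad {V : Type} {e f g h : Sym2 V}
    (hef : Incid e f) (heg : Incid e g)
    (hhe : Incid h e) (hhf : ¬ Incid h f) (hhg : ¬ Incid h g) :
    ∃ v, v ∈ e ∧ v ∈ f ∧ v ∈ g := by
  classical
  induction e using Sym2.ind with
  | _ a b =>
  have hf : a ∈ f ∨ b ∈ f := by
    obtain ⟨v, hv1, hv2⟩ := hef
    rw [Sym2.mem_iff] at hv1; rcases hv1 with rfl | rfl <;> tauto
  have hg : a ∈ g ∨ b ∈ g := by
    obtain ⟨v, hv1, hv2⟩ := heg
    rw [Sym2.mem_iff] at hv1; rcases hv1 with rfl | rfl <;> tauto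
  by_cases hag : a ∈ g
  · by_cases haf : a ∈ f
    · exact ⟨a, by simp, haf, hag⟩
    · have hbf : b ∈ f := hf.resolve_left haf
      obtain ⟨v, hv1, hv2⟩ := hhe
      rw [Sym2.mem_iff] at hv2
      rcases hv2 with rfl | rfl
      · exact absurd ⟨v, hv1, hag⟩ hhg
      · exact absurd ⟨v, hv1, hbf⟩ hhf
  · have hbg : b ∈ g := hg.resolve_left hag
    by_cases hbf : b ∈ f
    · exact ⟨b, by simp, hbf, hbg⟩
    · have haf : a ∈ f := hf.resolve_right hbf
      obtain ⟨v, hv1, hv2⟩ := hhe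
      rw [Sym2.mem_iff] at hv2
      rcases hv2 with rfl | rfl
      · exact absurd ⟨v, hv1, haf⟩ hhf
      · exact absurd ⟨v, hv1, hbg⟩ hhg

/- ### Cyclic edge labellings -/

structure GoodLabel {V : Type} (G : SimpleGraph V) (n : ℕ) (E : ZMod n → Sym2 V) : Prop where
  inj : Function.Injective E
  mem : ∀ i, E i ∈ G.edgeSet
  surj : ∀ e ∈ G.edgeSet, ∃ i, e = E i
  adj : ∀ i j, (cycZ n).Adj i j ↔ (E i ≠ E j ∧ ¬ Incid (E i) (E j))

lemma goodLabel_of_iso {V : Type} {G : SimpleGraph V} {n : ℕ}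
    (φ : mcSkeleton G ≃g cycZ n) :
    GoodLabel G n (fun i => (φ.symm i : Sym2 V)) := by
  constructor
  · intro i j h
    exact φ.symm.injective (Subtype.ext h)
  · intro i; exact (φ.symm i).2
  · intro e he; exact ⟨φ ⟨e, he⟩, by simp⟩
  · intro i j
    constructor
    · intro h
      have h2 : (mcSkeleton G).Adj (φ.symm i) (φ.symm j) := φ.symm.map_adj_iff.mpr h
      exact ⟨fun he => h2.1 (Subtype.ext he), h2.2⟩
    · intro ⟨h1, h2⟩
      have h3 : (mcSkeleton G).Adj (φ.symm i) (φ.symm j) :=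
        ⟨fun he => h1 (congrArg Subtype.val he), h2⟩
      exact φ.symm.map_adj_iff.mp h3

lemma iso_of_goodLabel {V : Type} {G : SimpleGraph V} {n : ℕ} {E : ZMod n → Sym2 V}
    (h : GoodLabel G n E) : Nonempty (mcSkeleton G ≃g cycZ n) := by
  have hbij : Function.Bijective (fun i => (⟨E i, h.mem i⟩ : G.edgeSet)) := by
    constructor
    · intro i j hij
      exact h.inj (congrArg Subtype.val hij)
    · rintro ⟨e, he⟩
      obtain ⟨i, rfl⟩ := h.surj e he
      exact ⟨i, rfl⟩
  refine ⟨(RelIso.mk (Equiv.ofBijective _ hbij) ?_).symm⟩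
  intro i j
  show (mcSkeleton G).Adj ⟨E i, _⟩ ⟨E j, _⟩ ↔ (cycZ n).Adj i j
  rw [h.adj i j]
  constructor
  · intro ⟨h1, h2⟩
    exact ⟨fun he => h1 (Subtype.ext he), h2⟩
  · intro ⟨h1, h2⟩
    exact ⟨fun he => h1 (congrArg Subtype.val he), h2⟩

lemma incid_map {V W : Type} {f : V → W} (hf : Function.Injective f) (e e' : Sym2 V) :
    Incid (Sym2.map f e) (Sym2.map f e') ↔ Incid e e' := by
  constructor
  · rintro ⟨w, hw1, hw2⟩
    rw [Sym2.mem_map] at hw1 hw2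
    obtain ⟨a, ha, haw⟩ := hw1
    obtain ⟨b, hb, hbw⟩ := hw2
    have : a = b := hf (haw.trans hbw.symm)
    exact ⟨a, ha, this ▸ hb⟩
  · rintro ⟨v, hv1, hv2⟩
    exact ⟨f v, Sym2.mem_map.mpr ⟨v, hv1, rfl⟩, Sym2.mem_map.mpr ⟨v, hv2, rfl⟩⟩

lemma goodLabel_transport {V W : Type} {G : SimpleGraph V} {H : SimpleGraph W}
    (ψ : G ≃g H) {n : ℕ} {L : ZMod n → Sym2 W} (h : GoodLabel H n L) :
    GoodLabel G n (fun i => Sym2.map ψ.symm (L i)) := by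
  have hinj : Function.Injective (Sym2.map (ψ.symm : W → V)) :=
    Sym2.map.injective ψ.symm.injective
  constructor
  · intro i j hij
    exact h.inj (hinj hij)
  · intro i
    exact ψ.symm.map_mem_edgeSet_iff.mpr (h.mem i)
  · intro e he
    have : Sym2.map ψ e ∈ H.edgeSet := ψ.map_mem_edgeSet_iff.mpr he
    obtain ⟨i, hi⟩ := h.surj _ this
    refine ⟨i, ?_⟩
    rw [← hi, Sym2.map_map]
    have : (⇑ψ.symm ∘ ⇑ψ) = id := by
      funext x; simp
    rw [this, Sym2.map_id]; rfl
  · intro i j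
    rw [h.adj i j]
    constructor
    · intro ⟨h1, h2⟩
      refine ⟨fun he => h1 (hinj he), ?_⟩
      rw [incid_map ψ.symm.injective]
      exact h2
    · intro ⟨h1, h2⟩
      rw [incid_map ψ.symm.injective] at h2
      exact ⟨fun he => h1 (he ▸ rfl), h2⟩

lemma bound_of_goodLabel {V : Type} [DecidableEq V] {G : SimpleGraph V} {n : ℕ}
    {E : ZMod n → Sym2 V} (h : GoodLabel G n E)
    (htf : ∀ i j k : ZMod n, (cycZ n).Adj i j → (cycZ n).Adj j k → (cycZ n).Adj i k → False) :
    ∀ s : Finset (Sym2 V), IsMatchingSet G s → s.card ≤ 2 := by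
  intro s hs
  by_contra hc
  push_neg at hc
  obtain ⟨t, hts, htc⟩ := Finset.exists_subset_card_eq (show 3 ≤ s.card from hc)
  obtain ⟨a, b, c, hab, hac, hbc, rfl⟩ := Finset.card_eq_three.mp htc
  have ha := hts (by simp : a ∈ ({a,b,c} : Finset (Sym2 V)))
  have hb := hts (by simp : b ∈ ({a,b,c} : Finset (Sym2 V)))
  have hc' := hts (by simp : c ∈ ({a,b,c} : Finset (Sym2 V)))
  obtain ⟨i, rfl⟩ := h.surj a (hs.1 a ha)
  obtain ⟨j, rfl⟩ := h.surj b (hs.1 b hb)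
  obtain ⟨k, rfl⟩ := h.surj c (hs.1 c hc')
  exact htf i j k
    ((h.adj i j).mpr ⟨hab, hs.2 _ ha _ hb hab⟩)
    ((h.adj j k).mpr ⟨hbc, hs.2 _ hb _ hc' hbc⟩)
    ((h.adj i k).mpr ⟨hac, hs.2 _ ha _ hc' hac⟩)

/- ### Refutation of n = 3 and n ≥ 7 -/

lemma zmodNe {n : ℕ} {a b : ℕ} (ha : a < n) (hb : b < n) (hab : a ≠ b) :
    ((a : ℕ) : ZMod n) ≠ ((b : ℕ) : ZMod n) := by
  intro hc
  rw [ZMod.natCast_eq_natCast_iff] at hc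
  have h2 : a % n = b % n := hc
  rw [Nat.mod_eq_of_lt ha, Nat.mod_eq_of_lt hb] at h2
  exact hab h2

lemma refute3 {V : Type} [DecidableEq V] {G : SimpleGraph V} {E : ZMod 3 → Sym2 V}
    (h : GoodLabel G 3 E) (hb : ∀ s, IsMatchingSet G s → s.card ≤ 2) : False := by
  have key : ∀ i j : ZMod 3, i ≠ j → ¬ Incid (E i) (E j) := by
    intro i j hij
    exact ((h.adj i j).mp ((by decide : ∀ i j : ZMod 3, i ≠ j → (cycZ 3).Adj i j) i j hij)).2
  have hne : ∀ i j : ZMod 3, i ≠ j → E i ≠ E j := fun i j hij he => hij (h.inj he)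
  have hms : IsMatchingSet G {E 0, E 1, E 2} := by
    constructor
    · intro e he
      simp only [Finset.mem_insert, Finset.mem_singleton] at he
      rcases he with rfl | rfl | rfl <;> exact h.mem _
    · intro e he f hf hef
      simp only [Finset.mem_insert, Finset.mem_singleton] at he hf
      rcases he with rfl | rfl | rfl <;> rcases hf with rfl | rfl | rfl <;>
        first
          | exact absurd rfl hef
          | exact key _ _ (by decide)
  have hcard : ({E 0, E 1, E 2} : Finset (Sym2 V)).card = 3 := by
    rw [Finset.card_insert_of_notMem, Finset.card_insert_of_notMem, Finset.card_singleton]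
    · simp only [Finset.mem_singleton]
      exact hne 1 2 (by decide)
    · simp only [Finset.mem_insert, Finset.mem_singleton]
      push_neg
      exact ⟨hne 0 1 (by decide), hne 0 2 (by decide)⟩
  have := hb _ hms
  rw [hcard] at this
  omega

section RefuteBig
variable {V : Type} {G : SimpleGraph V} {n : ℕ} {E : ZMod n → Sym2 V}

lemma refute_big (h : GoodLabel G n E) (hn : 7 ≤ n) : False := by
  -- basic index facts
  have cancel : ∀ (i x y : ZMod n), i + x = i + y → x = y := fun i x y hh =>
    add_left_cancel hh
  have adjSucc : ∀ i : ZMod n, (cycZ n).Adj i (i + 1) := by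
    intro i
    rw [cycZ, SimpleGraph.fromRel_adj]
    refine ⟨fun hh => ?_, Or.inl rfl⟩
    have h0 : (0 : ZMod n) = 1 := cancel i 0 1 (by rw [add_zero]; exact hh)
    have : ((0 : ℕ) : ZMod n) = ((1 : ℕ) : ZMod n) := by exact_mod_cast h0
    exact zmodNe (show 0 < n by omega) (show 1 < n by omega) (by omega) this
  have notAdj : ∀ (i : ZMod n) (d : ℕ), 2 ≤ d → d + 1 < n →
      ¬ (cycZ n).Adj i (i + (d : ℕ)) := by
    intro i d h2 h3 hadj
    rw [cycZ, SimpleGraph.fromRel_adj] at hadj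
    rcases hadj.2 with hh | hh
    · have h0 : ((d : ℕ) : ZMod n) = 1 := cancel i _ 1 hh
      have : ((d : ℕ) : ZMod n) = ((1 : ℕ) : ZMod n) := by exact_mod_cast h0
      exact zmodNe (by omega) (by omega) (by omega) this
    · have h0 : (0 : ZMod n) = (d : ℕ) + 1 :=
        cancel i 0 _ (by rw [add_zero, ← add_assoc]; exact hh)
      have : ((0 : ℕ) : ZMod n) = ((d + 1 : ℕ) : ZMod n) := by push_cast; exact h0
      exact zmodNe (by omega) (by omega) (by omega) this
  have idxNe : ∀ (i : ZMod n) (d : ℕ), 0 < d → d < n → i ≠ i + (d : ℕ) := by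
    intro i d h1 h2 hh
    have h0 : (0 : ZMod n) = (d : ℕ) := cancel i 0 _ (by rw [add_zero]; exact hh)
    have : ((0 : ℕ) : ZMod n) = ((d : ℕ) : ZMod n) := by exact_mod_cast h0
    exact zmodNe (by omega) (by omega) (by omega) this
  have meet : ∀ (i : ZMod n) (d : ℕ), 2 ≤ d → d + 1 < n → Incid (E i) (E (i + (d : ℕ))) := by
    intro i d h2 h3
    have h4 := notAdj i d h2 h3
    rw [h.adj] at h4
    push_neg at h4
    exact h4 (fun he => idxNe i d (by omega) (by omega) (h.inj he))
  have disj : ∀ i : ZMod n, ¬ Incid (E i) (E (i + 1)) :=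
    fun i => ((h.adj _ _).mp (adjSucc i)).2
  -- the common vertices
  have uex : ∀ k : ZMod n, ∃ v, v ∈ E k ∧ v ∈ E (k + 2) ∧ v ∈ E (k + 4) := by
    intro k
    have m2 : Incid (E k) (E (k + 2)) := by
      have := meet k 2 (le_refl 2) (by omega); norm_num at this ⊢; exact this
    have m4 : Incid (E k) (E (k + 4)) := by
      have := meet k 4 (by omega) (by omega); norm_num at this ⊢; exact this
    have m3 : Incid (E (k + 3)) (E k) := by
      have := meet k 3 (by omega) (by omega); norm_num at this; exact incid_symm this
    have d23 : ¬ Incid (E (k + 3)) (E (k + 2)) := by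
      intro hc
      exact disj (k + 2) (by
        have : k + 2 + 1 = k + 3 := by ring
        rw [this]; exact incid_symm hc)
    have d34 : ¬ Incid (E (k + 3)) (E (k + 4)) := by
      have : k + 3 + 1 = k + 4 := by ring
      have hd := disj (k + 3); rw [this] at hd; exact hd
    exact quad m2 m4 m3 d23 d34
  classical
  set u : ZMod n → V := fun k => (uex k).choose with hu
  have umem : ∀ k, u k ∈ E k ∧ u k ∈ E (k + 2) ∧ u k ∈ E (k + 4) := fun k => (uex k).choose_spec
  have Ene : ∀ (i : ZMod n) (d : ℕ), 0 < d → d < n → E i ≠ E (i + (d : ℕ)) :=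
    fun i d h1 h2 he => idxNe i d h1 h2 (h.inj he)
  have step : ∀ k, u k = u (k + 2) := by
    intro k
    by_contra hne
    have he : E (k + 2) = E (k + 4) := by
      refine sym2_eq_of_two_mem hne (umem k).2.1 (umem (k+2)).1 (umem k).2.2 ?_
      have : k + 2 + 2 = k + 4 := by ring
      rw [← this]; exact (umem (k+2)).2.1
    have := Ene (k + 2) 2 (by omega) (by omega)
    rw [show ((k : ZMod n) + 2) + ((2:ℕ) : ZMod n) = k + 4 by push_cast; ring] at this
    exact this he
  rcases Nat.even_or_odd n with heven | hodd
  · -- even case, n ≥ 8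
    obtain ⟨m, hm⟩ := heven
    have hn8 : 8 ≤ n := by omega
    have m3 : Incid (E 0) (E 3) := by
      have := meet 0 3 (by omega) (by omega); norm_num at this; exact this
    have m5 : Incid (E 0) (E 5) := by
      have := meet 0 5 (by omega) (by omega); norm_num at this; exact this
    obtain ⟨p, hp0, hp3⟩ := m3
    obtain ⟨q, hq0, hq5⟩ := m5
    have u0mem := umem 0
    have u1mem := umem 1
    norm_num at u0mem u1mem
    have disj2 : ¬ Incid (E 2) (E 3) := by
      have hd := disj 2
      rw [show (2 : ZMod n) + 1 = 3 by norm_num] at hd; exact hd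
    have disj4 : ¬ Incid (E 4) (E 5) := by
      have hd := disj 4
      rw [show (4 : ZMod n) + 1 = 5 by norm_num] at hd; exact hd
    have disj0 : ¬ Incid (E 0) (E 1) := by
      have hd := disj 0
      rw [show (0 : ZMod n) + 1 = 1 by norm_num] at hd; exact hd
    have hpne : p ≠ u 0 := fun hpe =>
      disj2 ⟨p, by rw [hpe]; exact u0mem.2.1, hp3⟩
    have hqne : q ≠ u 0 := fun hqe =>
      disj4 ⟨q, by rw [hqe]; exact u0mem.2.2, hq5⟩
    have hpq : p = q := mem3 u0mem.1 hp0 hq0 hpne hqne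
    have hpu1 : p ≠ u 1 := fun hpe =>
      disj0 ⟨p, hp0, by rw [hpe]; exact u1mem.1⟩
    have hE35 : E 3 = E 5 := by
      refine sym2_eq_of_two_mem hpu1 hp3 u1mem.2.1 ?_ u1mem.2.2
      rw [hpq]; exact hq5
    have := Ene 3 2 (by omega) (by omega)
    rw [show ((3 : ZMod n)) + ((2:ℕ) : ZMod n) = 5 by push_cast; ring] at this
    exact this hE35
  · -- odd case
    have chain : ∀ m : ℕ, u 0 = u ((2 * m : ℕ) : ZMod n) := by
      intro m
      induction m with
      | zero => norm_num
      | succ m ih =>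
        rw [ih, step ((2 * m : ℕ) : ZMod n)]
        congr 1
        push_cast
        ring
    obtain ⟨m, hm⟩ := hodd
    have h1 : u 0 = u 1 := by
      have := chain ((n + 1) / 2)
      rw [show (2 * ((n + 1) / 2)) = n + 1 by omega] at this
      rw [this]
      congr 1
      push_cast [ZMod.natCast_self]
      ring
    have u0mem := umem 0
    have u1mem := umem 1
    exact disj 0 ⟨u 0, u0mem.1, by norm_num; rw [h1]; exact u1mem.1⟩

end RefuteBig

lemma incid_iff {V : Type} (a b c d : V) :
    Incid s(a,b) s(c,d) ↔ (a = c ∨ a = d ∨ b = c ∨ b = d) := by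
  constructor
  · rintro ⟨v, hv1, hv2⟩
    rw [Sym2.mem_iff] at hv1 hv2
    rcases hv1 with rfl | rfl <;> tauto
  · rintro (rfl | rfl | rfl | rfl)
    · exact ⟨a, by simp, by simp⟩
    · exact ⟨a, by simp, by simp⟩
    · exact ⟨b, by simp, by simp⟩
    · exact ⟨b, by simp, by simp⟩


set_option maxRecDepth 10000 in
set_option maxHeartbeats 1000000 in
lemma build4aux {V : Type} {G : SimpleGraph V} (a m c x m' z : V)
    (d1 : m ≠ a) (d2 : m ≠ c) (d3 : m' ≠ x) (d4 : m' ≠ z) (d5 : a ≠ c) (d6 : x ≠ z)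
    (d7 : m ≠ m') (d8 : m ≠ x) (d9 : m ≠ z) (d10 : a ≠ m') (d11 : a ≠ x) (d12 : a ≠ z)
    (d13 : c ≠ m') (d14 : c ≠ x) (d15 : c ≠ z)
    (hadj : ∀ v w, G.Adj v w ↔
      (s(v,w) = s(m,a) ∨ s(v,w) = s(m,c) ∨ s(v,w) = s(m',x) ∨ s(v,w) = s(m',z)))
    (hsurj : Function.Surjective ![a, m, c, x, m', z]) :
    Nonempty (G ≃g twoP3) := by
  have d1' := d1.symm; have d2' := d2.symm; have d3' := d3.symm; have d4' := d4.symm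
  have d5' := d5.symm; have d6' := d6.symm; have d7' := d7.symm; have d8' := d8.symm
  have d9' := d9.symm; have d10' := d10.symm; have d11' := d11.symm; have d12' := d12.symm
  have d13' := d13.symm; have d14' := d14.symm; have d15' := d15.symm
  have hinj : Function.Injective ![a, m, c, x, m', z] := by
    intro i j hij
    fin_cases i <;> fin_cases j <;>
      first
        | rfl
        | exact absurd hij (by assumption)
        | exact absurd hij.symm (by assumption)
  refine ⟨(RelIso.mk (Equiv.ofBijective _ ⟨hinj, hsurj⟩) ?_).symm⟩
  intro i j
  show G.Adj (![a, m, c, x, m', z] i) (![a, m, c, x, m', z] j) ↔ twoP3.Adj i j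
  rw [hadj]
  have e0 : (![a, m, c, x, m', z] : Fin 6 → V) 0 = a := rfl
  have e1 : (![a, m, c, x, m', z] : Fin 6 → V) 1 = m := rfl
  have e2 : (![a, m, c, x, m', z] : Fin 6 → V) 2 = c := rfl
  have e3 : (![a, m, c, x, m', z] : Fin 6 → V) 3 = x := rfl
  have e4 : (![a, m, c, x, m', z] : Fin 6 → V) 4 = m' := rfl
  have e5 : (![a, m, c, x, m', z] : Fin 6 → V) 5 = z := rfl
  have f6 : ∀ i : Fin 6, i = 0 ∨ i = 1 ∨ i = 2 ∨ i = 3 ∨ i = 4 ∨ i = 5 := by decide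
  rcases f6 i with rfl | rfl | rfl | rfl | rfl | rfl <;>
    rcases f6 j with rfl | rfl | rfl | rfl | rfl | rfl <;>
    simp only [e0, e1, e2, e3, e4, e5] <;>
    (constructor
     · intro hd
       first
       | decide
       | (exfalso; rcases hd with hh | hh | hh | hh <;> rw [Sym2.eq_iff] at hh <;>
           rcases hh with ⟨h1, h2⟩ | ⟨h1, h2⟩ <;>
           first
             | exact absurd h1 (by assumption)
             | exact absurd h2 (by assumption))
     · intro hA
       first
       | exact absurd hA (by decide)
       | simp [Sym2.eq_iff])

section Build4
variable {V : Type} {G : SimpleGraph V} {E : ZMod 4 → Sym2 V}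

lemma build4 (hiso : ∀ v : V, ∃ w, G.Adj v w) (h : GoodLabel G 4 E) :
    Nonempty (G ≃g twoP3) := by
  classical
  have adjE : ∀ x y : V, G.Adj x y ↔ ∃ i, s(x,y) = E i := by
    intro x y
    rw [← SimpleGraph.mem_edgeSet]
    exact ⟨h.surj _, fun ⟨i, hi⟩ => hi ▸ h.mem i⟩
  have vcover : ∀ v : V, ∃ i, v ∈ E i := by
    intro v
    obtain ⟨w, hw⟩ := hiso v
    obtain ⟨i, hi⟩ := h.surj s(v,w) (G.mem_edgeSet.mpr hw)
    exact ⟨i, hi ▸ (by simp : v ∈ s(v,w))⟩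
  have meet' : ∀ i j : ZMod 4, i ≠ j → ¬ (cycZ 4).Adj i j → Incid (E i) (E j) := by
    intro i j hij hna
    by_contra hni
    exact hna ((h.adj i j).mpr ⟨fun he => hij (h.inj he), hni⟩)
  have disj' : ∀ i j : ZMod 4, (cycZ 4).Adj i j → ¬ Incid (E i) (E j) :=
    fun i j ha => ((h.adj i j).mp ha).2
  obtain ⟨m, hm0, hm2⟩ := meet' 0 2 (by decide) (by decide)
  obtain ⟨m', hm1, hm3⟩ := meet' 1 3 (by decide) (by decide)
  obtain ⟨a, ha⟩ := Sym2.mem_iff_exists.mp hm0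
  obtain ⟨c, hc⟩ := Sym2.mem_iff_exists.mp hm2
  obtain ⟨x, hx⟩ := Sym2.mem_iff_exists.mp hm1
  obtain ⟨z, hz⟩ := Sym2.mem_iff_exists.mp hm3
  have hma : m ≠ a := fun he =>
    (G.not_isDiag_of_mem_edgeSet (ha ▸ h.mem 0)) (Sym2.mk_isDiag_iff.mpr he)
  have hmc : m ≠ c := fun he =>
    (G.not_isDiag_of_mem_edgeSet (hc ▸ h.mem 2)) (Sym2.mk_isDiag_iff.mpr he)
  have hmx : m' ≠ x := fun he =>
    (G.not_isDiag_of_mem_edgeSet (hx ▸ h.mem 1)) (Sym2.mk_isDiag_iff.mpr he)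
  have hmz : m' ≠ z := fun he =>
    (G.not_isDiag_of_mem_edgeSet (hz ▸ h.mem 3)) (Sym2.mk_isDiag_iff.mpr he)
  have hac : a ≠ c := by
    rintro rfl
    have : E 0 = E 2 := by rw [ha, hc]
    exact (by decide : (0 : ZMod 4) ≠ 2) (h.inj this)
  have hxz : x ≠ z := by
    rintro rfl
    have : E 1 = E 3 := by rw [hx, hz]
    exact (by decide : (1 : ZMod 4) ≠ 3) (h.inj this)
  have d01 := disj' 0 1 (by decide)
  have d03 := disj' 0 3 (by decide)
  have d12 := disj' 1 2 (by decide)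
  have d23 := disj' 2 3 (by decide)
  rw [ha, hx, incid_iff] at d01
  rw [ha, hz, incid_iff] at d03
  rw [hx, hc, incid_iff] at d12
  rw [hc, hz, incid_iff] at d23
  push_neg at d01 d03 d12 d23
  obtain ⟨hmm', hmx', ham', hax⟩ := d01
  obtain ⟨-, hmz', -, haz⟩ := d03
  obtain ⟨hm'm, hm'c, hxm, hxc⟩ := d12
  obtain ⟨-, hmz2, hcm', hcz⟩ := d23
  have hE : ∀ k : ZMod 4, E k = s(m,a) ∨ E k = s(m,c) ∨ E k = s(m',x) ∨ E k = s(m',z) := by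
    intro k
    have h4 : k = 0 ∨ k = 1 ∨ k = 2 ∨ k = 3 :=
      (by decide : ∀ k : ZMod 4, k = 0 ∨ k = 1 ∨ k = 2 ∨ k = 3) k
    rcases h4 with rfl | rfl | rfl | rfl
    · exact Or.inl ha
    · exact Or.inr (Or.inr (Or.inl hx))
    · exact Or.inr (Or.inl hc)
    · exact Or.inr (Or.inr (Or.inr hz))
  have adjList : ∀ v w : V, G.Adj v w ↔
      (s(v,w) = s(m,a) ∨ s(v,w) = s(m,c) ∨ s(v,w) = s(m',x) ∨ s(v,w) = s(m',z)) := by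
    intro v w
    rw [adjE]
    constructor
    · rintro ⟨k, hk⟩; rw [hk]; exact hE k
    · rintro (hh | hh | hh | hh)
      exacts [⟨0, by rw [hh, ha]⟩, ⟨2, by rw [hh, hc]⟩, ⟨1, by rw [hh, hx]⟩, ⟨3, by rw [hh, hz]⟩]
  have hsurj : Function.Surjective ![a, m, c, x, m', z] := by
    intro v
    obtain ⟨i, hv⟩ := vcover v
    have h4 : i = 0 ∨ i = 1 ∨ i = 2 ∨ i = 3 :=
      (by decide : ∀ k : ZMod 4, k = 0 ∨ k = 1 ∨ k = 2 ∨ k = 3) i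
    rcases h4 with rfl | rfl | rfl | rfl
    · rw [ha, Sym2.mem_iff] at hv
      rcases hv with rfl | rfl
      · exact ⟨1, rfl⟩
      · exact ⟨0, rfl⟩
    · rw [hx, Sym2.mem_iff] at hv
      rcases hv with rfl | rfl
      · exact ⟨4, rfl⟩
      · exact ⟨3, rfl⟩
    · rw [hc, Sym2.mem_iff] at hv
      rcases hv with rfl | rfl
      · exact ⟨1, rfl⟩
      · exact ⟨2, rfl⟩
    · rw [hz, Sym2.mem_iff] at hv
      rcases hv with rfl | rfl
      · exact ⟨4, rfl⟩
      · exact ⟨5, rfl⟩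
  exact build4aux a m c x m' z hma hmc hmx hmz hac hxz hmm' hmx' hmz' ham' hax haz
    (fun hh => hcm' hh) (fun hh => hxc hh.symm) hcz adjList hsurj
end Build4

section Build5
variable {V : Type} {G : SimpleGraph V} {E : ZMod 5 → Sym2 V}

lemma build5 (hiso : ∀ v : V, ∃ w, G.Adj v w) (h : GoodLabel G 5 E) :
    Nonempty (G ≃g cycZ 5) := by
  classical
  have adjE : ∀ x y : V, G.Adj x y ↔ ∃ i, s(x,y) = E i := by
    intro x y
    rw [← SimpleGraph.mem_edgeSet]
    exact ⟨h.surj _, fun ⟨i, hi⟩ => hi ▸ h.mem i⟩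
  have vcover : ∀ v : V, ∃ i, v ∈ E i := by
    intro v
    obtain ⟨w, hw⟩ := hiso v
    obtain ⟨i, hi⟩ := h.surj s(v,w) (G.mem_edgeSet.mpr hw)
    exact ⟨i, hi ▸ (by simp : v ∈ s(v,w))⟩
  have meet' : ∀ i j : ZMod 5, i ≠ j → ¬ (cycZ 5).Adj i j → Incid (E i) (E j) := by
    intro i j hij hna
    by_contra hni
    exact hna ((h.adj i j).mpr ⟨fun he => hij (h.inj he), hni⟩)
  have disj' : ∀ i j : ZMod 5, (cycZ 5).Adj i j → ¬ Incid (E i) (E j) :=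
    fun i j ha => ((h.adj i j).mp ha).2
  have wex : ∀ k : ZMod 5, ∃ v, v ∈ E k ∧ v ∈ E (k + 2) := fun k =>
    meet' k (k + 2) ((by decide : ∀ k : ZMod 5, k ≠ k + 2) k)
      ((by decide : ∀ k : ZMod 5, ¬ (cycZ 5).Adj k (k + 2)) k)
  set w : ZMod 5 → V := fun k => (wex k).choose with hw
  have wmem : ∀ k, w k ∈ E k ∧ w k ∈ E (k + 2) := fun k => (wex k).choose_spec
  have A : ∀ k : ZMod 5, w k ≠ w (k + 1) := by
    intro k he
    refine disj' (k + 2) (k + 2 + 1) ((by decide : ∀ k : ZMod 5, (cycZ 5).Adj k (k+1)) _)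
      ⟨w k, (wmem k).2, ?_⟩
    rw [he, show k + 2 + 1 = (k + 1) + 2 by ring]
    exact (wmem (k + 1)).2
  have B : ∀ k : ZMod 5, w k ≠ w (k + 2) := by
    intro k he
    refine disj' k (k + 4) ((by decide : ∀ k : ZMod 5, (cycZ 5).Adj k (k+4)) _)
      ⟨w k, (wmem k).1, ?_⟩
    rw [he, show k + 4 = (k + 2) + 2 by ring]
    exact (wmem (k + 2)).2
  have wne : ∀ k l : ZMod 5, k ≠ l → w k ≠ w l := by
    intro k l hkl
    rcases (by decide : ∀ k l : ZMod 5, k ≠ l →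
        (l = k + 1 ∨ l = k + 2 ∨ k = l + 1 ∨ k = l + 2)) k l hkl with hc | hc | hc | hc
    · rw [hc]; exact A k
    · rw [hc]; exact B k
    · intro he; exact A l (by rw [← hc]; exact he.symm)
    · intro he; exact B l (by rw [← hc]; exact he.symm)
  have winj : ∀ k l : ZMod 5, w k = w l → k = l := by
    intro k l he
    by_contra hne
    exact wne k l hne he
  have Estruct : ∀ k : ZMod 5, E k = s(w (k + 3), w k) := by
    intro k
    refine eq_of_mem_mem (wne (k+3) k ((by decide : ∀ k : ZMod 5, k + 3 ≠ k) k)) ?_ (wmem k).1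
    have := (wmem (k + 3)).2
    rwa [show k + 3 + 2 = k by ring_nf; exact (by decide : ∀ k : ZMod 5, 5 + k = k) k] at this
  have hsurj : Function.Surjective (fun j : ZMod 5 => w (3 * j)) := by
    intro v
    obtain ⟨i, hv⟩ := vcover v
    rw [Estruct i, Sym2.mem_iff] at hv
    rcases hv with rfl | rfl
    · exact ⟨2 * (i + 3), by
        show w (3 * (2 * (i + 3))) = w (i + 3)
        rw [(by decide : ∀ k : ZMod 5, 3 * (2 * k) = k) (i + 3)]⟩
    · exact ⟨2 * i, by
        show w (3 * (2 * i)) = w i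
        rw [(by decide : ∀ k : ZMod 5, 3 * (2 * k) = k) i]⟩
  have hinj : Function.Injective (fun j : ZMod 5 => w (3 * j)) := by
    intro k l he
    exact (by decide : ∀ k l : ZMod 5, 3 * k = 3 * l → k = l) k l (winj _ _ he)
  refine ⟨(RelIso.mk (Equiv.ofBijective _ ⟨hinj, hsurj⟩) ?_).symm⟩
  intro i j
  show G.Adj (w (3 * i)) (w (3 * j)) ↔ (cycZ 5).Adj i j
  rw [adjE]
  constructor
  · rintro ⟨k, hk⟩
    rw [Estruct k, Sym2.eq_iff] at hk
    refine (by decide : ∀ i j k : ZMod 5,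
      ((3*i = k + 3 ∧ 3*j = k) ∨ (3*i = k ∧ 3*j = k + 3)) → (cycZ 5).Adj i j) i j k ?_
    rcases hk with ⟨h1, h2⟩ | ⟨h1, h2⟩
    · exact Or.inl ⟨winj _ _ h1, winj _ _ h2⟩
    · exact Or.inr ⟨winj _ _ h1, winj _ _ h2⟩
  · intro hA
    rcases (by decide : ∀ i j : ZMod 5, (cycZ 5).Adj i j → (j = i + 1 ∨ i = j + 1)) i j hA
      with rfl | rfl
    · exact ⟨3 * i, by
        rw [Estruct (3 * i), show 3 * i + 3 = 3 * (i + 1) by ring]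
        exact Sym2.eq_swap⟩
    · exact ⟨3 * j, by
        rw [Estruct (3 * j), show 3 * j + 3 = 3 * (j + 1) by ring]⟩
end Build5

set_option maxRecDepth 10000 in
set_option maxHeartbeats 1000000 in
lemma build6aux {V : Type} {G : SimpleGraph V} (x y z u u' : V)
    (d1 : u ≠ u') (d2 : u ≠ x) (d3 : u ≠ y) (d4 : u ≠ z)
    (d5 : u' ≠ x) (d6 : u' ≠ y) (d7 : u' ≠ z)
    (d8 : x ≠ y) (d9 : x ≠ z) (d10 : y ≠ z)
    (hadj : ∀ v w, G.Adj v w ↔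
      (s(v,w) = s(u,x) ∨ s(v,w) = s(u,y) ∨ s(v,w) = s(u,z) ∨
       s(v,w) = s(u',x) ∨ s(v,w) = s(u',y) ∨ s(v,w) = s(u',z)))
    (hsurj : Function.Surjective (Sum.elim ![x, y, z] ![u, u'] : Fin 3 ⊕ Fin 2 → V)) :
    Nonempty (G ≃g K32) := by
  have d1' := d1.symm; have d2' := d2.symm; have d3' := d3.symm; have d4' := d4.symm
  have d5' := d5.symm; have d6' := d6.symm; have d7' := d7.symm; have d8' := d8.symm
  have d9' := d9.symm; have d10' := d10.symm
  have hinj : Function.Injective (Sum.elim ![x, y, z] ![u, u'] : Fin 3 ⊕ Fin 2 → V) := by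
    intro i j hij
    rcases i with i | i <;> rcases j with j | j <;> fin_cases i <;> fin_cases j <;>
      first
        | rfl
        | exact absurd hij (by assumption)
  refine ⟨(RelIso.mk (Equiv.ofBijective _ ⟨hinj, hsurj⟩) ?_).symm⟩
  intro i j
  show G.Adj (Sum.elim ![x, y, z] ![u, u'] i) (Sum.elim ![x, y, z] ![u, u'] j) ↔ K32.Adj i j
  rw [hadj]
  have e0 : (Sum.elim ![x, y, z] ![u, u'] : Fin 3 ⊕ Fin 2 → V) (.inl 0) = x := rfl
  have e1 : (Sum.elim ![x, y, z] ![u, u'] : Fin 3 ⊕ Fin 2 → V) (.inl 1) = y := rfl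
  have e2 : (Sum.elim ![x, y, z] ![u, u'] : Fin 3 ⊕ Fin 2 → V) (.inl 2) = z := rfl
  have e3 : (Sum.elim ![x, y, z] ![u, u'] : Fin 3 ⊕ Fin 2 → V) (.inr 0) = u := rfl
  have e4 : (Sum.elim ![x, y, z] ![u, u'] : Fin 3 ⊕ Fin 2 → V) (.inr 1) = u' := rfl
  have f5 : ∀ i : Fin 3 ⊕ Fin 2, i = .inl 0 ∨ i = .inl 1 ∨ i = .inl 2 ∨
      i = .inr 0 ∨ i = .inr 1 := by decide
  rcases f5 i with rfl | rfl | rfl | rfl | rfl <;>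
    rcases f5 j with rfl | rfl | rfl | rfl | rfl <;>
    simp only [e0, e1, e2, e3, e4] <;>
    (constructor
     · intro hd
       first
       | decide
       | (exfalso; rcases hd with hh | hh | hh | hh | hh | hh <;> rw [Sym2.eq_iff] at hh <;>
           rcases hh with ⟨h1, h2⟩ | ⟨h1, h2⟩ <;>
           first
             | exact absurd h1 (by assumption)
             | exact absurd h2 (by assumption))
     · intro hA
       first
       | exact absurd hA (by decide)
       | simp [Sym2.eq_iff])

section Build6
variable {V : Type} {G : SimpleGraph V} {E : ZMod 6 → Sym2 V}

lemma build6 (hiso : ∀ v : V, ∃ w, G.Adj v w) (h : GoodLabel G 6 E) :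
    Nonempty (G ≃g K32) := by
  classical
  have adjE : ∀ a b : V, G.Adj a b ↔ ∃ i, s(a,b) = E i := by
    intro a b
    rw [← SimpleGraph.mem_edgeSet]
    exact ⟨h.surj _, fun ⟨i, hi⟩ => hi ▸ h.mem i⟩
  have vcover : ∀ v : V, ∃ i, v ∈ E i := by
    intro v
    obtain ⟨w, hw⟩ := hiso v
    obtain ⟨i, hi⟩ := h.surj s(v,w) (G.mem_edgeSet.mpr hw)
    exact ⟨i, hi ▸ (by simp : v ∈ s(v,w))⟩
  have meet' : ∀ i j : ZMod 6, i ≠ j → ¬ (cycZ 6).Adj i j → Incid (E i) (E j) := by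
    intro i j hij hna
    by_contra hni
    exact hna ((h.adj i j).mpr ⟨fun he => hij (h.inj he), hni⟩)
  have disj' : ∀ i j : ZMod 6, (cycZ 6).Adj i j → ¬ Incid (E i) (E j) :=
    fun i j ha => ((h.adj i j).mp ha).2
  obtain ⟨u, hu0, hu2, hu4⟩ := quad (meet' 0 2 (by decide) (by decide))
    (meet' 0 4 (by decide) (by decide))
    (incid_symm (meet' 0 3 (by decide) (by decide)))
    (fun hc => disj' 2 3 (by decide) (incid_symm hc))
    (disj' 3 4 (by decide))
  obtain ⟨u', hu1, hu3, hu5⟩ := quad (meet' 1 3 (by decide) (by decide))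
    (meet' 1 5 (by decide) (by decide))
    (incid_symm (meet' 1 4 (by decide) (by decide)))
    (fun hc => disj' 3 4 (by decide) (incid_symm hc))
    (disj' 4 5 (by decide))
  obtain ⟨x, hx0, hx3⟩ := meet' 0 3 (by decide) (by decide)
  obtain ⟨y, hy1, hy4⟩ := meet' 1 4 (by decide) (by decide)
  obtain ⟨z, hz2, hz5⟩ := meet' 2 5 (by decide) (by decide)
  have d1 : u ≠ u' := fun he => disj' 0 1 (by decide) ⟨u, hu0, by rw [he]; exact hu1⟩
  have d2 : u ≠ x := fun he => disj' 2 3 (by decide) ⟨u, hu2, by rw [he]; exact hx3⟩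
  have d3 : u ≠ y := fun he => disj' 0 1 (by decide) ⟨u, hu0, by rw [he]; exact hy1⟩
  have d4 : u ≠ z := fun he => disj' 4 5 (by decide) ⟨u, hu4, by rw [he]; exact hz5⟩
  have d5 : u' ≠ x := fun he => disj' 0 1 (by decide) ⟨u', by rw [he]; exact hx0, hu1⟩
  have d6 : u' ≠ y := fun he => disj' 4 5 (by decide) ⟨u', by rw [he]; exact hy4, hu5⟩
  have d7 : u' ≠ z := fun he => disj' 1 2 (by decide) ⟨u', hu1, by rw [he]; exact hz2⟩
  have d8 : x ≠ y := fun he => disj' 3 4 (by decide) ⟨x, hx3, by rw [he]; exact hy4⟩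
  have d9 : x ≠ z := fun he => disj' 2 3 (by decide) ⟨x, by rw [he]; exact hz2, hx3⟩
  have d10 : y ≠ z := fun he => disj' 1 2 (by decide) ⟨y, hy1, by rw [he]; exact hz2⟩
  have he0 : E 0 = s(u, x) := eq_of_mem_mem d2 hu0 hx0
  have he3 : E 3 = s(u', x) := eq_of_mem_mem d5 hu3 hx3
  have he4 : E 4 = s(u, y) := eq_of_mem_mem d3 hu4 hy4
  have he1 : E 1 = s(u', y) := eq_of_mem_mem d6 hu1 hy1
  have he2 : E 2 = s(u, z) := eq_of_mem_mem d4 hu2 hz2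
  have he5 : E 5 = s(u', z) := eq_of_mem_mem d7 hu5 hz5
  have hE : ∀ k : ZMod 6, E k = s(u,x) ∨ E k = s(u,y) ∨ E k = s(u,z) ∨
      E k = s(u',x) ∨ E k = s(u',y) ∨ E k = s(u',z) := by
    intro k
    rcases (by decide : ∀ k : ZMod 6, k = 0 ∨ k = 1 ∨ k = 2 ∨ k = 3 ∨ k = 4 ∨ k = 5) k with
      rfl | rfl | rfl | rfl | rfl | rfl
    · exact Or.inl he0
    · exact Or.inr (Or.inr (Or.inr (Or.inr (Or.inl he1))))
    · exact Or.inr (Or.inr (Or.inl he2))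
    · exact Or.inr (Or.inr (Or.inr (Or.inl he3)))
    · exact Or.inr (Or.inl he4)
    · exact Or.inr (Or.inr (Or.inr (Or.inr (Or.inr he5))))
  have adjList : ∀ v w : V, G.Adj v w ↔
      (s(v,w) = s(u,x) ∨ s(v,w) = s(u,y) ∨ s(v,w) = s(u,z) ∨
       s(v,w) = s(u',x) ∨ s(v,w) = s(u',y) ∨ s(v,w) = s(u',z)) := by
    intro v w
    rw [adjE]
    constructor
    · rintro ⟨k, hk⟩; rw [hk]; exact hE k
    · rintro (hh | hh | hh | hh | hh | hh)
      exacts [⟨0, by rw [hh, he0]⟩, ⟨4, by rw [hh, he4]⟩, ⟨2, by rw [hh, he2]⟩,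
        ⟨3, by rw [hh, he3]⟩, ⟨1, by rw [hh, he1]⟩, ⟨5, by rw [hh, he5]⟩]
  have hsurj : Function.Surjective (Sum.elim ![x, y, z] ![u, u'] : Fin 3 ⊕ Fin 2 → V) := by
    intro v
    obtain ⟨i, hv⟩ := vcover v
    rcases hE i with hh | hh | hh | hh | hh | hh <;> rw [hh, Sym2.mem_iff] at hv <;>
      rcases hv with rfl | rfl
    · exact ⟨.inr 0, rfl⟩
    · exact ⟨.inl 0, rfl⟩
    · exact ⟨.inr 0, rfl⟩
    · exact ⟨.inl 1, rfl⟩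
    · exact ⟨.inr 0, rfl⟩
    · exact ⟨.inl 2, rfl⟩
    · exact ⟨.inr 1, rfl⟩
    · exact ⟨.inl 0, rfl⟩
    · exact ⟨.inr 1, rfl⟩
    · exact ⟨.inl 1, rfl⟩
    · exact ⟨.inr 1, rfl⟩
    · exact ⟨.inl 2, rfl⟩
  exact build6aux x y z u u' d1 d2 d3 d4 d5 d6 d7 d8 d9 d10 adjList hsurj
end Build6


/- ### The three concrete labellings -/

def L4 : ZMod 4 → Sym2 (Fin 6) := fun i =>
  if i = 0 then s(0,1) else if i = 1 then s(3,4) else if i = 2 then s(1,2) else s(4,5)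

lemma good4 : GoodLabel twoP3 4 L4 := by
  constructor
  · decide
  · intro i
    fin_cases i
    · show s(0,1) ∈ twoP3.edgeSet
      rw [SimpleGraph.mem_edgeSet]; decide
    · show s(3,4) ∈ twoP3.edgeSet
      rw [SimpleGraph.mem_edgeSet]; decide
    · show s(1,2) ∈ twoP3.edgeSet
      rw [SimpleGraph.mem_edgeSet]; decide
    · show s(4,5) ∈ twoP3.edgeSet
      rw [SimpleGraph.mem_edgeSet]; decide
  · intro e he
    rw [twoP3, SimpleGraph.edgeSet_fromEdgeSet] at he
    have h1 := he.1
    simp only [Set.mem_insert_iff, Set.mem_singleton_iff] at h1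
    rcases h1 with rfl | rfl | rfl | rfl
    · exact ⟨0, by decide⟩
    · exact ⟨2, by decide⟩
    · exact ⟨1, by decide⟩
    · exact ⟨3, by decide⟩
  · decide

def L5 : ZMod 5 → Sym2 (ZMod 5) := fun i => s(2*i, 2*i+1)

lemma good5 : GoodLabel (cycZ 5) 5 L5 := by
  constructor
  · decide
  · intro i
    rw [L5, SimpleGraph.mem_edgeSet]
    revert i; decide
  · intro e
    induction e using Sym2.ind with
    | _ x y =>
    intro he
    rw [SimpleGraph.mem_edgeSet, cycZ, SimpleGraph.fromRel_adj] at he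
    rcases he.2 with h | h
    · exact ⟨3*x, by subst h; revert x; decide⟩
    · exact ⟨3*y, by subst h; revert y; decide⟩
  · decide

def L6 : ZMod 6 → Sym2 (Fin 3 ⊕ Fin 2) := fun i =>
  if i = 0 then s(.inl 0, .inr 0) else if i = 1 then s(.inl 1, .inr 1)
  else if i = 2 then s(.inl 2, .inr 0) else if i = 3 then s(.inl 0, .inr 1)
  else if i = 4 then s(.inl 1, .inr 0) else s(.inl 2, .inr 1)

lemma good6 : GoodLabel K32 6 L6 := by
  constructor
  · decide
  · intro i
    fin_cases i
    · show s(Sum.inl 0, Sum.inr 0) ∈ K32.edgeSet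
      rw [SimpleGraph.mem_edgeSet]; decide
    · show s(Sum.inl 1, Sum.inr 1) ∈ K32.edgeSet
      rw [SimpleGraph.mem_edgeSet]; decide
    · show s(Sum.inl 2, Sum.inr 0) ∈ K32.edgeSet
      rw [SimpleGraph.mem_edgeSet]; decide
    · show s(Sum.inl 0, Sum.inr 1) ∈ K32.edgeSet
      rw [SimpleGraph.mem_edgeSet]; decide
    · show s(Sum.inl 1, Sum.inr 0) ∈ K32.edgeSet
      rw [SimpleGraph.mem_edgeSet]; decide
    · show s(Sum.inl 2, Sum.inr 1) ∈ K32.edgeSet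
      rw [SimpleGraph.mem_edgeSet]; decide
  · have key : ∀ (i : Fin 3) (j : Fin 2), ∃ k, s(Sum.inl i, Sum.inr j) = L6 k := by decide
    intro e
    induction e using Sym2.ind with
    | _ x y =>
    intro he
    rw [SimpleGraph.mem_edgeSet] at he
    rcases x with i | i <;> rcases y with j | j
    · simp [K32] at he
    · exact key i j
    · obtain ⟨k, hk⟩ := key j i
      exact ⟨k, by rw [Sym2.eq_swap]; exact hk⟩
    · simp [K32] at he
  · decide

lemma htf4 : ∀ i j k : ZMod 4, (cycZ 4).Adj i j → (cycZ 4).Adj j k → (cycZ 4).Adj i k → False := by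
  decide
lemma htf5 : ∀ i j k : ZMod 5, (cycZ 5).Adj i j → (cycZ 5).Adj j k → (cycZ 5).Adj i k → False := by
  decide
lemma htf6 : ∀ i j k : ZMod 6, (cycZ 6).Adj i j → (cycZ 6).Adj j k → (cycZ 6).Adj i k → False := by
  decide

/-- The matching complexes that are 1-dimensional spheres
(cycles) are exactly `C₄`, `C₅` and `C₆`, arising uniquely from the graphs
`2P₃`, `C₅` and `K₃,₂` respectively. (`M(G)` is the cycle `Cₙ` iff its
1-skeleton is `Cₙ` and it is 1-dimensional, i.e. has no face of 3 edges.) -/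

theorem matchingComplex_one_spheres {V : Type} [Fintype V] [DecidableEq V]
    (G : SimpleGraph V) (hiso : ∀ v : V, ∃ w, G.Adj v w) (n : ℕ) (hn : 3 ≤ n) :
    (Nonempty (mcSkeleton G ≃g cycZ n) ∧
        ∀ s : Finset (Sym2 V), IsMatchingSet G s → s.card ≤ 2) ↔
      ((n = 4 ∧ Nonempty (G ≃g twoP3)) ∨
        (n = 5 ∧ Nonempty (G ≃g cycZ 5)) ∨
        (n = 6 ∧ Nonempty (G ≃g K32))) := by
  constructor
  · rintro ⟨⟨φ⟩, hb⟩
    have h := goodLabel_of_iso φ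
    have h7 : n < 7 := by
      by_contra hc
      exact refute_big h (by omega)
    interval_cases n
    · exact (refute3 h hb).elim
    · exact Or.inl ⟨rfl, build4 hiso h⟩
    · exact Or.inr (Or.inl ⟨rfl, build5 hiso h⟩)
    · exact Or.inr (Or.inr ⟨rfl, build6 hiso h⟩)
  · rintro (⟨rfl, ⟨ψ⟩⟩ | ⟨rfl, ⟨ψ⟩⟩ | ⟨rfl, ⟨ψ⟩⟩)
    · have lab := goodLabel_transport ψ good4
      exact ⟨iso_of_goodLabel lab, bound_of_goodLabel lab htf4⟩
    · have lab := goodLabel_transport ψ good5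
      exact ⟨iso_of_goodLabel lab, bound_of_goodLabel lab htf5⟩
    · have lab := goodLabel_transport ψ good6
      exact ⟨iso_of_goodLabel lab, bound_of_goodLabel lab htf6⟩
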